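/- If X, Y, Z are independent Exp(1) random variables, δ ∈ ℝ, and d ≥ 0, then P(Y ≥ X + Z − δ and Z ≤ d) = (1/4)e^{δ}(1 − e^{−2d}) if δ ≤ 0, (1/4)(4 − e^{−δ}(3 + e^{−2(d−δ)} + 2δ)) if 0 < δ ≤ d, and (1/4)(4 − 4e^{−d} − 2d e^{−δ}) if δ > d. -/

import Mathlib

/-!
Conditioning on `Z = z`, the event becomes `{Y - X ≥ z - δ}` for `z ≤ d` and is empty
otherwise. For independent `X, Y ∼ Exp(1)` the difference `Y - X` is standard Laplace:
integrating the CDF of `X` against the density of `Y` gives `P(Y - X ≥ t) = e^{-t}/2` for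
`t ≥ 0` and `1 - e^{t}/2` for `t ≤ 0`. Hence the probability is
`∫₀ᵈ e^{-z} P(Y - X ≥ z - δ) dz`, and the three cases record where the kink `z = δ` of the
integrand lies relative to `[0, d]`.
-/

open Real MeasureTheory ProbabilityTheory Set
open scoped ENNReal

lemma setLIntegral_expMeasure (r : ℝ) (f : ℝ → ℝ≥0∞) {s : Set ℝ} (hs : MeasurableSet s) :
    ∫⁻ x in s, f x ∂expMeasure r =
      ∫⁻ x in Ici 0 ∩ s, ENNReal.ofReal (r * exp (-(r * x))) * f x := by
  have hpdf : Measurable (exponentialPDF r) := (measurable_exponentialPDFReal r).ennreal_ofReal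
  change ∫⁻ x in s, f x ∂volume.withDensity (exponentialPDF r) = _
  rw [setLIntegral_withDensity_eq_setLIntegral_mul_non_measurable _ hpdf f hs
      (ae_of_all _ fun _ => ENNReal.ofReal_lt_top),
    ← Measure.restrict_restrict measurableSet_Ici, ← lintegral_indicator measurableSet_Ici]
  refine setLIntegral_congr_fun hs fun x _ => ?_
  by_cases hx : 0 ≤ x
  · simp [indicator_of_mem (show x ∈ Ici 0 from hx), exponentialPDF_of_nonneg hx]
  · simp [indicator_of_notMem (show x ∉ Ici 0 from hx), exponentialPDF_of_neg (not_le.1 hx)]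

-- For `x < 0` the right side is `0` because `ENNReal.ofReal` truncates negative values.
lemma expMeasure_Iic {r : ℝ} (hr : 0 < r) (x : ℝ) :
    expMeasure r (Iic x) = ENNReal.ofReal (1 - exp (-(r * x))) := by
  have := isProbabilityMeasure_expMeasure hr
  rw [← ofReal_cdf, cdf_expMeasure_eq hr]
  split_ifs with hx
  · rfl
  · rw [ENNReal.ofReal_zero, eq_comm, ENNReal.ofReal_eq_zero, sub_nonpos, one_le_exp_iff]
    nlinarith

instance isProbabilityMeasure_expMeasure_one : IsProbabilityMeasure (expMeasure 1) :=
  isProbabilityMeasure_expMeasure one_pos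

noncomputable def laplaceTail (t : ℝ) : ℝ := if 0 ≤ t then exp (-t) / 2 else 1 - exp t / 2

lemma laplaceTail_of_nonneg {t : ℝ} (ht : 0 ≤ t) : laplaceTail t = exp (-t) / 2 := if_pos ht

lemma laplaceTail_of_nonpos {t : ℝ} (ht : t ≤ 0) : laplaceTail t = 1 - exp t / 2 := by
  rcases ht.lt_or_eq with ht | rfl
  · exact if_neg (not_le.2 ht)
  · norm_num [laplaceTail]

lemma laplaceTail_nonneg (t : ℝ) : 0 ≤ laplaceTail t := by
  rcases le_total 0 t with ht | ht
  · rw [laplaceTail_of_nonneg ht]; positivity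
  · rw [laplaceTail_of_nonpos ht]; linarith [exp_le_one_iff.2 ht]

@[fun_prop]
lemma continuous_laplaceTail : Continuous laplaceTail :=
  Continuous.if_le (by fun_prop) (by fun_prop) continuous_const continuous_id
    fun t ht => by norm_num [← ht]

lemma setLIntegral_Ici_exp_neg_sub_exp {t a : ℝ} (ha : t ≤ a) :
    ∫⁻ y in Ici a, ENNReal.ofReal (exp (-y) - exp (t - 2 * y)) =
      ENNReal.ofReal (exp (-a) - exp (t - 2 * a) / 2) := by
  have e1 : (fun y => exp (-y)) = fun y => exp ((-1) * y) := by ext; ring_nf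
  have e2 : (fun y => exp (t - 2 * y)) = fun y => exp t * exp ((-2) * y) := by
    ext; rw [← exp_add]; ring_nf
  have i1 : IntegrableOn (fun y => exp (-y)) (Ioi a) :=
    e1 ▸ integrableOn_exp_mul_Ioi (by norm_num) a
  have i2 : IntegrableOn (fun y => exp (t - 2 * y)) (Ioi a) :=
    e2 ▸ (integrableOn_exp_mul_Ioi (by norm_num) a).const_mul (exp t)
  rw [← ofReal_integral_eq_lintegral_ofReal, integral_Ici_eq_integral_Ioi, integral_sub i1 i2, e1,
    e2, integral_const_mul, integral_exp_mul_Ioi (by norm_num), integral_exp_mul_Ioi (by norm_num),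
    show t - 2 * a = t + (-2) * a by ring, exp_add, show -a = -1 * a by ring]
  · ring_nf
  · exact (integrableOn_Ici_iff_integrableOn_Ioi (by simp)).2 (i1.sub i2)
  · filter_upwards [ae_restrict_mem measurableSet_Ici] with y hy
    exact sub_nonneg.2 (exp_le_exp.2 (by linarith [mem_Ici.1 hy]))

lemma expMeasure_one_prod_setOf_add_le (t : ℝ) :
    (expMeasure 1).prod (expMeasure 1) {p : ℝ × ℝ | p.1 + t ≤ p.2} =
      ENNReal.ofReal (laplaceTail t) := by
  have hfiber (y : ℝ) : (fun x => (x, y)) ⁻¹' {p : ℝ × ℝ | p.1 + t ≤ p.2} = Iic (y - t) := by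
    ext x; simp [le_sub_iff_add_le]
  have hdensity (y : ℝ) : ENNReal.ofReal (1 * exp (-(1 * y))) *
      ENNReal.ofReal (1 - exp (-(1 * (y - t)))) = ENNReal.ofReal (exp (-y) - exp (t - 2 * y)) := by
    rw [← ENNReal.ofReal_mul (by positivity), one_mul, one_mul, one_mul, mul_sub, mul_one,
      ← exp_add]
    ring_nf
  rw [Measure.prod_apply_symm (measurableSet_le (by fun_prop) measurable_snd)]
  simp_rw [hfiber, expMeasure_Iic one_pos]
  rw [← setLIntegral_univ, setLIntegral_expMeasure 1 _ MeasurableSet.univ, inter_univ]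
  simp_rw [hdensity]
  rcases le_total 0 t with ht | ht
  · rw [← Ico_union_Ici_eq_Ici ht, lintegral_union measurableSet_Ici
        ((Iio_disjoint_Ici le_rfl).mono_left Ico_subset_Iio_self),
      setLIntegral_congr_fun measurableSet_Ico (g := fun _ => 0) fun y hy => ?_, lintegral_zero,
      zero_add, setLIntegral_Ici_exp_neg_sub_exp le_rfl, laplaceTail_of_nonneg ht]
    · congr 1; ring_nf
    · exact ENNReal.ofReal_eq_zero.2 (sub_nonpos.2 (exp_le_exp.2 (by linarith [hy.2])))
  · rw [setLIntegral_Ici_exp_neg_sub_exp ht, laplaceTail_of_nonpos ht]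
    norm_num

lemma integral_exp_neg_mul_laplaceTail_of_le {a b δ : ℝ} (ha : a ≤ δ) (hb : b ≤ δ) :
    ∫ z in a..b, exp (-z) * laplaceTail (z - δ) =
      exp (-a) - exp (-b) - (b - a) * exp (-δ) / 2 := by
  refine (intervalIntegral.integral_eq_sub_of_hasDerivAt
    (f := fun z => -exp (-z) - z * (exp (-δ) / 2)) (fun z hz => ?_)
    (Continuous.intervalIntegrable (by fun_prop) a b)).trans (by ring)
  have hz : z ≤ δ := by rcases mem_uIcc.1 hz with h | h <;> linarith
  rw [laplaceTail_of_nonpos (by linarith)]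
  refine ((hasDerivAt_neg z).exp.neg.sub
    ((hasDerivAt_id' z).mul_const (exp (-δ) / 2))).congr_deriv ?_
  have hexp : exp (-z) * exp (z - δ) = exp (-δ) := by rw [← exp_add]; ring_nf
  linear_combination (1 / 2) * hexp

lemma integral_exp_neg_mul_laplaceTail_of_ge {a b δ : ℝ} (ha : δ ≤ a) (hb : δ ≤ b) :
    ∫ z in a..b, exp (-z) * laplaceTail (z - δ) = (exp (δ - 2 * a) - exp (δ - 2 * b)) / 4 := by
  refine (intervalIntegral.integral_eq_sub_of_hasDerivAt
    (f := fun z => -exp (δ - 2 * z) / 4) (fun z hz => ?_)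
    (Continuous.intervalIntegrable (by fun_prop) a b)).trans (by ring)
  have hz : δ ≤ z := by rcases mem_uIcc.1 hz with h | h <;> linarith
  rw [laplaceTail_of_nonneg (by linarith)]
  refine ((((hasDerivAt_id' z).const_mul 2).const_sub δ).exp.neg.div_const 4).congr_deriv ?_
  have hexp : exp (-z) * exp (-(z - δ)) = exp (δ - 2 * z) := by rw [← exp_add]; ring_nf
  linear_combination (-1 / 2) * hexp

lemma expMeasure_one_prod_prod_setOf_eq_integral (δ d : ℝ) (hd : 0 ≤ d) :
    ((expMeasure 1).prod (expMeasure 1)).prod (expMeasure 1)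
        {q : (ℝ × ℝ) × ℝ | q.1.1 + q.2 - δ ≤ q.1.2 ∧ q.2 ≤ d} =
      ENNReal.ofReal (∫ z in 0..d, exp (-z) * laplaceTail (z - δ)) := by
  have hsection (z : ℝ) : (expMeasure 1).prod (expMeasure 1)
      ((fun p => (p, z)) ⁻¹' {q : (ℝ × ℝ) × ℝ | q.1.1 + q.2 - δ ≤ q.1.2 ∧ q.2 ≤ d}) =
      (Iic d).indicator (fun z => ENNReal.ofReal (laplaceTail (z - δ))) z := by
    by_cases hz : z ≤ d
    · rw [indicator_of_mem (mem_Iic.2 hz), ← expMeasure_one_prod_setOf_add_le]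
      congr 1; ext p; simp [hz, add_sub_assoc]
    · rw [indicator_of_notMem (mt mem_Iic.1 hz),
        ← measure_empty (μ := (expMeasure 1).prod (expMeasure 1))]
      congr 1; ext p; simp [hz]
  have hS : MeasurableSet {q : (ℝ × ℝ) × ℝ | q.1.1 + q.2 - δ ≤ q.1.2 ∧ q.2 ≤ d} :=
    by measurability
  rw [Measure.prod_apply_symm hS]
  simp_rw [hsection]
  rw [lintegral_indicator measurableSet_Iic, setLIntegral_expMeasure 1 _ measurableSet_Iic,
    Ici_inter_Iic]
  simp_rw [one_mul, ← ENNReal.ofReal_mul (exp_pos _).le]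
  rw [← ofReal_integral_eq_lintegral_ofReal (Continuous.integrableOn_Icc (by fun_prop))
      (ae_of_all _ fun z => mul_nonneg (exp_pos _).le (laplaceTail_nonneg _)),
    integral_Icc_eq_integral_Ioc, ← intervalIntegral.integral_of_le hd]

lemma integral_exp_neg_mul_laplaceTail_of_nonpos {δ d : ℝ} (hδ : δ ≤ 0) (hd : 0 ≤ d) :
    ∫ z in 0..d, exp (-z) * laplaceTail (z - δ) = (1 / 4) * exp δ * (1 - exp (-(2 * d))) := by
  rw [integral_exp_neg_mul_laplaceTail_of_ge hδ (hδ.trans hd), sub_eq_add_neg δ (2 * d), exp_add]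
  simp only [mul_zero, sub_zero]
  ring

lemma integral_exp_neg_mul_laplaceTail_of_pos_of_le {δ d : ℝ} (hδ : 0 < δ) (hδd : δ ≤ d) :
    ∫ z in 0..d, exp (-z) * laplaceTail (z - δ) =
      (1 / 4) * (4 - exp (-δ) * (3 + exp (-(2 * (d - δ))) + 2 * δ)) := by
  rw [← intervalIntegral.integral_add_adjacent_intervals (b := δ)
      (Continuous.intervalIntegrable (by fun_prop) _ _)
      (Continuous.intervalIntegrable (by fun_prop) _ _),
    integral_exp_neg_mul_laplaceTail_of_le hδ.le le_rfl,
    integral_exp_neg_mul_laplaceTail_of_ge le_rfl hδd, show δ - 2 * δ = -δ by ring,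
    show δ - 2 * d = -δ + -(2 * (d - δ)) by ring, exp_add]
  simp only [neg_zero, exp_zero, sub_zero]
  ring

lemma integral_exp_neg_mul_laplaceTail_of_lt {δ d : ℝ} (hdδ : d < δ) (hd : 0 ≤ d) :
    ∫ z in 0..d, exp (-z) * laplaceTail (z - δ) =
      (1 / 4) * (4 - 4 * exp (-d) - 2 * d * exp (-δ)) := by
  rw [integral_exp_neg_mul_laplaceTail_of_le (hd.trans hdδ.le) hdδ.le]
  simp only [neg_zero, exp_zero, sub_zero]
  ring

lemma map_prodMk_prodMk_eq_of_iIndepFun {Ω β : Type*} [MeasurableSpace Ω] [MeasurableSpace β]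
    {μ : Measure Ω} [IsFiniteMeasure μ] {X Y Z : Ω → β}
    (hX : Measurable X) (hY : Measurable Y) (hZ : Measurable Z) (h : iIndepFun ![X, Y, Z] μ) :
    μ.map (fun ω => ((X ω, Y ω), Z ω)) = ((μ.map X).prod (μ.map Y)).prod (μ.map Z) := by
  have hmeas : ∀ i, Measurable (![X, Y, Z] i) := fun i => by fin_cases i <;> assumption
  have hXY : IndepFun X Y μ := h.indepFun (i := 0) (j := 1) (by decide)
  have hXYZ : IndepFun (fun ω => (X ω, Y ω)) Z μ :=
    h.indepFun_prodMk hmeas 0 1 2 (by decide) (by decide)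
  rw [hXYZ.map_prod_eq_prod_map_map (hX.prodMk hY).aemeasurable hZ.aemeasurable,
    hXY.map_prod_eq_prod_map_map hX.aemeasurable hY.aemeasurable]

/-- For independent `Exp(1)` variables `X, Y, Z`, `δ ∈ ℝ` and `d ≥ 0`, the probability
`P(Y ≥ X + Z − δ, Z ≤ d)` is given by the stated piecewise formula. -/
theorem prob_event_two {Ω : Type*} [MeasurableSpace Ω] (μ : Measure Ω)
    [IsProbabilityMeasure μ] (X Y Z : Ω → ℝ)
    (hX : Measurable X) (hY : Measurable Y) (hZ : Measurable Z)
    (hindep : iIndepFun ![X, Y, Z] μ)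
    (hXe : Measure.map X μ = expMeasure 1)
    (hYe : Measure.map Y μ = expMeasure 1)
    (hZe : Measure.map Z μ = expMeasure 1)
    (δ d : ℝ) (hd : 0 ≤ d) :
    (δ ≤ 0 → μ {ω | X ω + Z ω - δ ≤ Y ω ∧ Z ω ≤ d} =
        ENNReal.ofReal ((1 / 4) * exp δ * (1 - exp (-(2 * d))))) ∧
    (0 < δ → δ ≤ d → μ {ω | X ω + Z ω - δ ≤ Y ω ∧ Z ω ≤ d} =
        ENNReal.ofReal ((1 / 4) * (4 - exp (-δ) * (3 + exp (-(2 * (d - δ))) + 2 * δ)))) ∧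
    (d < δ → μ {ω | X ω + Z ω - δ ≤ Y ω ∧ Z ω ≤ d} =
        ENNReal.ofReal ((1 / 4) * (4 - 4 * exp (-d) - 2 * d * exp (-δ)))) := by
  have hlaw : μ.map (fun ω => ((X ω, Y ω), Z ω)) =
      ((expMeasure 1).prod (expMeasure 1)).prod (expMeasure 1) := by
    rw [map_prodMk_prodMk_eq_of_iIndepFun hX hY hZ hindep, hXe, hYe, hZe]
  have hprob : μ {ω | X ω + Z ω - δ ≤ Y ω ∧ Z ω ≤ d} =
      ENNReal.ofReal (∫ z in 0..d, exp (-z) * laplaceTail (z - δ)) := by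
    rw [← expMeasure_one_prod_prod_setOf_eq_integral δ d hd, ← hlaw,
      Measure.map_apply (by fun_prop) (by measurability)]
    rfl
  rw [hprob]
  exact ⟨fun hδ => by rw [integral_exp_neg_mul_laplaceTail_of_nonpos hδ hd],
    fun hδ hδd => by rw [integral_exp_neg_mul_laplaceTail_of_pos_of_le hδ hδd],
    fun hdδ => by rw [integral_exp_neg_mul_laplaceTail_of_lt hdδ hd]⟩
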